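/- Let D be an oriented knot diagram with n ≥ 1 crossings, modeled by a Gauss code g, and let D' be the diagram obtained from D by a crossing change at a crossing c₀. Then |span X_{D'}(t) − span X_D(t)| ≤ 2. -/

import Mathlib

open Polynomial Finset

/-- An oriented knot diagram with `n` crossings, modeled by its oriented Gauss code. -/
structure GaussCode (n : ℕ) where
  g : ZMod (2 * n) → Fin n × Bool
  o : Fin n → ZMod (2 * n)
  u : Fin n → ZMod (2 * n)
  over_iff : ∀ (c : Fin n) (e : ZMod (2 * n)), g e = (c, true) ↔ e = o c
  under_iff : ∀ (c : Fin n) (e : ZMod (2 * n)), g e = (c, false) ↔ e = u c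

namespace GaussCode

variable {n : ℕ}

/-- The warping degree of the base position `e`: the number of crossings whose
under-passage occurs strictly before its over-passage when traversing the diagram
starting at `e`. -/
def d (D : GaussCode n) (e : ZMod (2 * n)) : ℕ :=
  (Finset.univ.filter fun c : Fin n => (D.u c - e).val < (D.o c - e).val).card

/-- The warping crossing polynomial. -/
noncomputable def Xpoly (D : GaussCode n) : Polynomial ℤ :=
  ∑ c : Fin n, Polynomial.X ^ D.d (D.o c)

/-- The warping polynomial. -/
noncomputable def Wpoly (D : GaussCode n) : Polynomial ℤ :=
  ∑ k ∈ Finset.range (2 * n), Polynomial.X ^ D.d (k : ZMod (2 * n))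

/-- The warping degree of the diagram: minimum over all base positions. -/
noncomputable def wdeg (D : GaussCode n) : ℕ :=
  sInf (Set.range fun e : ZMod (2 * n) => D.d e)

/-- The diagram is alternating. -/
def Alternating (D : GaussCode n) : Prop :=
  ∀ e : ZMod (2 * n), (D.g e).2 ≠ (D.g (e + 1)).2

end GaussCode

/-!
Moving the base point across an over-passage raises the warping degree by one, moving it
across an under-passage lowers it by one. Hence the maximum of `d` over all positions is
attained just after an over-passage and its minimum at an over-passage, so every `d e` lies in
`[a, A + 1]`, where `[a, A]` is the range of exponents of `X_D`; moreover `d (u c) ≥ a + 1`.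
A crossing change at `c₀` changes every `d e` by at most one and swaps `o c₀` with `u c₀`, the
new exponent being `d' (u c₀) = d (u c₀) - 1 ∈ [a, A]`. So the exponents of `X_{D'}` lie in
`[a - 1, A + 1]` and the span grows by at most 2; the crossing change is an involution, which
gives the reverse inequality.
-/

namespace ZMod

theorem val_sub_one_add_one {m : ℕ} [NeZero m] {x : ZMod m} (hx : x ≠ 0) :
    (x - 1).val + 1 = x.val := by
  have hm : m ≠ 1 := by
    rintro rfl
    exact hx (Subsingleton.elim _ _)
  have hx' : 0 < x.val := val_pos.2 hx
  rw [val_sub (by rw [val_one_eq_one_mod, Nat.one_mod_eq_one.2 hm]; omega), val_one_eq_one_mod,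
    Nat.one_mod_eq_one.2 hm]
  omega

theorem val_neg_one_eq_sub_one {m : ℕ} [NeZero m] : (-1 : ZMod m).val = m - 1 := by
  obtain ⟨k, rfl⟩ := Nat.exists_eq_succ_of_ne_zero (NeZero.ne m)
  exact val_neg_one k

end ZMod

namespace Polynomial

theorem mem_support_sum_X_pow_iff {R ι : Type*} [Semiring R] [CharZero R] {s : Finset ι}
    {f : ι → ℕ} {k : ℕ} : k ∈ (∑ i ∈ s, X ^ f i : R[X]).support ↔ ∃ i ∈ s, f i = k := by
  simp only [mem_support_iff, finsetSum_coeff, coeff_X_pow, sum_boole, Nat.cast_ne_zero,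
    card_ne_zero, filter_nonempty_iff, eq_comm]

end Polynomial

namespace GaussCode

variable {n : ℕ} (D : GaussCode n)

theorem g_o (c : Fin n) : D.g (D.o c) = (c, true) :=
  (D.over_iff c _).2 rfl

theorem g_u (c : Fin n) : D.g (D.u c) = (c, false) :=
  (D.under_iff c _).2 rfl

theorem o_ne_u (c c' : Fin n) : D.o c ≠ D.u c' := fun h => by
  simpa [h, g_u] using D.g_o c

theorem o_injective : Function.Injective D.o := fun c c' h => by
  simpa [h, g_o, eq_comm] using D.g_o c

theorem u_injective : Function.Injective D.u := fun c c' h => by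
  simpa [h, g_u, eq_comm] using D.g_u c

theorem exists_o_eq_or_u_eq (e : ZMod (2 * n)) : (∃ c, D.o c = e) ∨ ∃ c, D.u c = e := by
  rcases hb : (D.g e).2
  · exact .inr ⟨(D.g e).1, ((D.under_iff _ _).1 (by rw [← hb])).symm⟩
  · exact .inl ⟨(D.g e).1, ((D.over_iff _ _).1 (by rw [← hb])).symm⟩

def underFirst (e : ZMod (2 * n)) : Finset (Fin n) :=
  {c | (D.u c - e).val < (D.o c - e).val}

theorem d_eq_card_underFirst (e : ZMod (2 * n)) : D.d e = #(D.underFirst e) := rfl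

variable {D} in
theorem mem_underFirst {e : ZMod (2 * n)} {c : Fin n} :
    c ∈ D.underFirst e ↔ (D.u c - e).val < (D.o c - e).val := by
  simp [underFirst]

theorem notMem_underFirst_o (c : Fin n) : c ∉ D.underFirst (D.o c) := by
  simp [mem_underFirst]

theorem mem_underFirst_u (c : Fin n) : c ∈ D.underFirst (D.u c) := by
  simpa [mem_underFirst, ZMod.val_pos, sub_eq_zero] using D.o_ne_u c c

section Shift

variable [NeZero n]

theorem mem_underFirst_add_one_iff {e : ZMod (2 * n)} {c : Fin n} (ho : D.o c ≠ e)
    (hu : D.u c ≠ e) : c ∈ D.underFirst (e + 1) ↔ c ∈ D.underFirst e := by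
  have hu' := ZMod.val_sub_one_add_one (sub_ne_zero.2 hu)
  have ho' := ZMod.val_sub_one_add_one (sub_ne_zero.2 ho)
  simp only [mem_underFirst, ← sub_sub]
  omega

theorem mem_underFirst_o_add_one (c : Fin n) : c ∈ D.underFirst (D.o c + 1) := by
  have h := ZMod.val_sub_one_add_one (sub_ne_zero.2 (D.o_ne_u c c).symm)
  have hlt := ZMod.val_lt (D.u c - D.o c)
  rw [mem_underFirst, ← sub_sub, ← sub_sub, sub_self, zero_sub, ZMod.val_neg_one_eq_sub_one]
  omega

theorem notMem_underFirst_u_add_one (c : Fin n) : c ∉ D.underFirst (D.u c + 1) := by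
  have hlt := ZMod.val_lt (D.o c - (D.u c + 1))
  rw [mem_underFirst, ← sub_sub, sub_self, zero_sub, ZMod.val_neg_one_eq_sub_one]
  omega

theorem underFirst_o_add_one (c : Fin n) :
    D.underFirst (D.o c + 1) = insert c (D.underFirst (D.o c)) := by
  ext c'
  by_cases hc : c' = c
  · subst hc
    simpa using D.mem_underFirst_o_add_one c'
  · rw [mem_insert, or_iff_right hc]
    exact D.mem_underFirst_add_one_iff (D.o_injective.ne hc) (D.o_ne_u c c').symm

theorem underFirst_u (c : Fin n) :
    D.underFirst (D.u c) = insert c (D.underFirst (D.u c + 1)) := by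
  ext c'
  by_cases hc : c' = c
  · subst hc
    simpa using D.mem_underFirst_u c'
  · rw [mem_insert, or_iff_right hc]
    exact (D.mem_underFirst_add_one_iff (D.o_ne_u c' c) (D.u_injective.ne hc)).symm

theorem d_o_add_one (c : Fin n) : D.d (D.o c + 1) = D.d (D.o c) + 1 := by
  rw [d_eq_card_underFirst, underFirst_o_add_one, card_insert_of_notMem (D.notMem_underFirst_o c),
    d_eq_card_underFirst]

theorem d_u_add_one (c : Fin n) : D.d (D.u c + 1) + 1 = D.d (D.u c) := by
  rw [d_eq_card_underFirst, d_eq_card_underFirst, underFirst_u,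
    card_insert_of_notMem (D.notMem_underFirst_u_add_one c)]

theorem d_le_add_one_of_forall_d_o_le {A : ℕ} (hA : ∀ c, D.d (D.o c) ≤ A)
    (e : ZMod (2 * n)) : D.d e ≤ A + 1 := by
  obtain ⟨e₀, he₀⟩ := Finite.exists_max D.d
  rcases D.exists_o_eq_or_u_eq (e₀ - 1) with ⟨c, hc⟩ | ⟨c, hc⟩
  · have hstep := D.d_o_add_one c
    rw [hc, sub_add_cancel, ← hc] at hstep
    have := hA c
    have := he₀ e
    omega
  · have hstep := D.d_u_add_one c
    rw [hc, sub_add_cancel, ← hc] at hstep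
    have := he₀ (D.u c)
    omega

theorem le_d_of_forall_le_d_o {a : ℕ} (ha : ∀ c, a ≤ D.d (D.o c)) (e : ZMod (2 * n)) :
    a ≤ D.d e := by
  obtain ⟨e₀, he₀⟩ := Finite.exists_min D.d
  rcases D.exists_o_eq_or_u_eq e₀ with ⟨c, rfl⟩ | ⟨c, rfl⟩
  · exact (ha c).trans (he₀ e)
  · have := D.d_u_add_one c
    have := he₀ (D.u c + 1)
    omega

end Shift

theorem mem_support_Xpoly {k : ℕ} : k ∈ D.Xpoly.support ↔ ∃ c, D.d (D.o c) = k := by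
  simp only [Xpoly, mem_support_sum_X_pow_iff, mem_univ, true_and]

theorem d_o_le_natDegree_Xpoly (c : Fin n) : D.d (D.o c) ≤ D.Xpoly.natDegree :=
  le_natDegree_of_mem_supp _ (D.mem_support_Xpoly.2 ⟨c, rfl⟩)

section Extremes

variable [NeZero n]

theorem Xpoly_ne_zero : D.Xpoly ≠ 0 := fun h => by
  simpa [h] using D.mem_support_Xpoly.2 ⟨0, rfl⟩

theorem exists_d_o_eq_natDegree_Xpoly : ∃ c, D.d (D.o c) = D.Xpoly.natDegree :=
  D.mem_support_Xpoly.1 (natDegree_mem_support_of_nonzero D.Xpoly_ne_zero)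

theorem exists_d_o_eq_natTrailingDegree_Xpoly : ∃ c, D.d (D.o c) = D.Xpoly.natTrailingDegree :=
  D.mem_support_Xpoly.1 (natTrailingDegree_mem_support_of_nonzero D.Xpoly_ne_zero)

theorem d_le_natDegree_Xpoly_add_one (e : ZMod (2 * n)) : D.d e ≤ D.Xpoly.natDegree + 1 :=
  D.d_le_add_one_of_forall_d_o_le D.d_o_le_natDegree_Xpoly e

theorem natTrailingDegree_Xpoly_le_d (e : ZMod (2 * n)) : D.Xpoly.natTrailingDegree ≤ D.d e :=
  D.le_d_of_forall_le_d_o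
    (fun c => natTrailingDegree_le_of_mem_supp _ (D.mem_support_Xpoly.2 ⟨c, rfl⟩)) e

theorem natTrailingDegree_Xpoly_add_one_le_d_u (c : Fin n) :
    D.Xpoly.natTrailingDegree + 1 ≤ D.d (D.u c) := by
  rw [← d_u_add_one]
  exact Nat.succ_le_succ (D.natTrailingDegree_Xpoly_le_d _)

end Extremes

structure IsCrossingChange (D D' : GaussCode n) (c₀ : Fin n) : Prop where
  o_self : D'.o c₀ = D.u c₀
  u_self : D'.u c₀ = D.o c₀
  o_of_ne : ∀ c ≠ c₀, D'.o c = D.o c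
  u_of_ne : ∀ c ≠ c₀, D'.u c = D.u c

variable {D} {D' : GaussCode n} {c₀ : Fin n}

theorem isCrossingChange_of_g_eq (h1 : D'.g (D.o c₀) = (c₀, false))
    (h2 : D'.g (D.u c₀) = (c₀, true))
    (h3 : ∀ e : ZMod (2 * n), e ≠ D.o c₀ → e ≠ D.u c₀ → D'.g e = D.g e) :
    IsCrossingChange D D' c₀ where
  o_self := ((D'.over_iff c₀ _).1 h2).symm
  u_self := ((D'.under_iff c₀ _).1 h1).symm
  o_of_ne c hc := ((D'.over_iff c _).1 <| by
    rw [h3 _ (D.o_injective.ne hc) (D.o_ne_u c c₀), g_o]).symm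
  u_of_ne c hc := ((D'.under_iff c _).1 <| by
    rw [h3 _ (D.o_ne_u c₀ c).symm (D.u_injective.ne hc), g_u]).symm

namespace IsCrossingChange

theorem symm (h : IsCrossingChange D D' c₀) : IsCrossingChange D' D c₀ where
  o_self := h.u_self.symm
  u_self := h.o_self.symm
  o_of_ne c hc := (h.o_of_ne c hc).symm
  u_of_ne c hc := (h.u_of_ne c hc).symm

theorem d_le_add_one (h : IsCrossingChange D D' c₀) (e : ZMod (2 * n)) :
    D'.d e ≤ D.d e + 1 := by
  have hsub : D'.underFirst e ⊆ insert c₀ (D.underFirst e) := by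
    intro c hc
    by_cases hc₀ : c = c₀
    · exact hc₀ ▸ mem_insert_self _ _
    · rw [mem_underFirst, h.o_of_ne c hc₀, h.u_of_ne c hc₀] at hc
      exact mem_insert_of_mem (mem_underFirst.2 hc)
  exact (card_le_card hsub).trans (card_insert_le _ _)

theorem d_u_self [NeZero n] (h : IsCrossingChange D D' c₀) :
    D'.d (D.u c₀) + 1 = D.d (D.u c₀) := by
  have hins : D.underFirst (D.u c₀) = insert c₀ (D'.underFirst (D.u c₀)) := by
    ext c
    by_cases hc₀ : c = c₀
    · subst hc₀
      simpa using D.mem_underFirst_u c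
    · rw [mem_insert, or_iff_right hc₀, mem_underFirst, mem_underFirst, h.o_of_ne c hc₀,
        h.u_of_ne c hc₀]
  have hnot : c₀ ∉ D'.underFirst (D.u c₀) := h.o_self ▸ D'.notMem_underFirst_o c₀
  rw [d_eq_card_underFirst D, hins, card_insert_of_notMem hnot, d_eq_card_underFirst]

theorem span_Xpoly_le [NeZero n] (h : IsCrossingChange D D' c₀) :
    D'.Xpoly.natDegree - D'.Xpoly.natTrailingDegree
      ≤ D.Xpoly.natDegree - D.Xpoly.natTrailingDegree + 2 := by
  have hbounds : ∀ c, D.Xpoly.natTrailingDegree ≤ D'.d (D'.o c) + 1 ∧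
      D'.d (D'.o c) ≤ D.Xpoly.natDegree + 1 := by
    intro c
    by_cases hc₀ : c = c₀
    · subst hc₀
      have := h.d_u_self
      have := D.d_le_natDegree_Xpoly_add_one (D.u c)
      have := D.natTrailingDegree_Xpoly_add_one_le_d_u c
      rw [h.o_self]
      omega
    · have := h.d_le_add_one (D.o c)
      have := h.symm.d_le_add_one (D.o c)
      have := D.natTrailingDegree_Xpoly_le_d (D.o c)
      have := D.d_o_le_natDegree_Xpoly c
      rw [h.o_of_ne c hc₀]
      omega
  obtain ⟨c, hc⟩ := D'.exists_d_o_eq_natDegree_Xpoly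
  obtain ⟨c', hc'⟩ := D'.exists_d_o_eq_natTrailingDegree_Xpoly
  have := hbounds c
  have := hbounds c'
  have := D.Xpoly.natTrailingDegree_le_natDegree
  omega

end IsCrossingChange

end GaussCode

/-- The spans of the warping crossing polynomials of `D` and of the diagram obtained
by a crossing change differ by at most 2. -/
theorem crossing_change_span
    (n : ℕ) (hn : 1 ≤ n) (D D' : GaussCode n) (c₀ : Fin n)
    (h1 : D'.g (D.o c₀) = (c₀, false))
    (h2 : D'.g (D.u c₀) = (c₀, true))
    (h3 : ∀ e : ZMod (2 * n), e ≠ D.o c₀ → e ≠ D.u c₀ → D'.g e = D.g e) :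
    |((D'.Xpoly.natDegree - D'.Xpoly.natTrailingDegree : ℕ) : ℤ)
      - ((D.Xpoly.natDegree - D.Xpoly.natTrailingDegree : ℕ) : ℤ)| ≤ 2 := by
  have : NeZero n := ⟨by omega⟩
  have h := GaussCode.isCrossingChange_of_g_eq h1 h2 h3
  have := h.span_Xpoly_le
  have := h.symm.span_Xpoly_le
  rw [abs_le]
  constructor <;> omega
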